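/- Let d ≥ 1, p > 1, λ > 0, B > 0, and let W : ℝ^d → ℝ be a function of class C² with inf_{ℝ^d} W > 0, D²W(x) ≥ λ⟨x⟩^{p−2} Id for all x, and |∇W(x)| ≤ B⟨x⟩^{p−1} for all x. Then liminf_{|y|→∞} W(y)/|y|^p > 0 and liminf_{|y|→∞} (∇W(y)·y)/W(y) > 1. -/

import Mathlib

open Filter
open Set
open scoped RealInnerProductSpace

/-!
Along a ray, `g t = W (t • y)` satisfies `g'' t ≥ λ c ‖y‖² (1 + t ‖y‖) ^ (p - 2)` with
`c = min 1 (√2 ^ (p - 2))⁻¹`, because `√(1 + s²)` lies between `(1 + s) / √2` and `1 + s`.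
Hence `g - A (1 + t ‖y‖) ^ p` is convex on `[0, 1]` for `A = λ c / (p (p - 1))`, and bounding
its slope on `[0, 1]` by its derivatives at the endpoints gives `W y ≥ A ‖y‖ ^ p - O(‖y‖)` and
`⟪∇W y, y⟫ - W y ≥ A (p - 1) / 2 ‖y‖ ^ p - O(1)`. With `⟪∇W y, y⟫ ≤ B 2 ^ (p - 1) ‖y‖ ^ p`
from the gradient bound, both `W y / ‖y‖ ^ p` and `⟪∇W y, y⟫ / W y - 1` stay between positive
constants for large `‖y‖`.
-/

lemma sqrt_one_add_sq_le_one_add {s : ℝ} (hs : 0 ≤ s) : √(1 + s ^ 2) ≤ 1 + s :=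
  Real.sqrt_le_iff.2 ⟨by linarith, by nlinarith⟩

lemma one_add_le_sqrt_two_mul_sqrt_one_add_sq (s : ℝ) : 1 + s ≤ √2 * √(1 + s ^ 2) := by
  rw [← Real.sqrt_mul zero_le_two]
  exact (le_abs_self _).trans (Real.abs_le_sqrt (by nlinarith [sq_nonneg (1 - s)]))

lemma rpow_one_add_le_rpow_sqrt_one_add_sq (q : ℝ) {s : ℝ} (hs : 0 ≤ s) :
    min 1 (√2 ^ q)⁻¹ * (1 + s) ^ q ≤ √(1 + s ^ 2) ^ q := by
  have h1s : 0 < 1 + s := by linarith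
  rcases le_total 0 q with hq | hq
  · have h := Real.rpow_le_rpow h1s.le (one_add_le_sqrt_two_mul_sqrt_one_add_sq s) hq
    rw [Real.mul_rpow (by positivity) (by positivity)] at h
    calc min 1 (√2 ^ q)⁻¹ * (1 + s) ^ q ≤ (√2 ^ q)⁻¹ * (1 + s) ^ q := by
          gcongr; exact min_le_right _ _
      _ ≤ √(1 + s ^ 2) ^ q := by
          rw [inv_mul_le_iff₀ (by positivity)]; exact h
  · calc min 1 (√2 ^ q)⁻¹ * (1 + s) ^ q ≤ 1 * (1 + s) ^ q := by
          gcongr; exact min_le_left _ _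
      _ ≤ √(1 + s ^ 2) ^ q := by
          rw [one_mul]
          exact Real.rpow_le_rpow_of_nonpos (by positivity) (sqrt_one_add_sq_le_one_add hs) hq

lemma deriv_le_slope_le_deriv_of_deriv2_nonneg {φ φ' φ'' : ℝ → ℝ} {a b : ℝ} (hab : a < b)
    (hφ : ∀ t ∈ Icc a b, HasDerivAt φ (φ' t) t)
    (hφ' : ∀ t ∈ Ioo a b, HasDerivAt φ' (φ'' t) t)
    (hφ'' : ∀ t ∈ Ioo a b, 0 ≤ φ'' t) :
    φ' a ≤ slope φ a b ∧ slope φ a b ≤ φ' b := by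
  have hconv : ConvexOn ℝ (Icc a b) φ := by
    refine convexOn_of_hasDerivWithinAt2_nonneg (f' := φ') (f'' := φ'') (convex_Icc a b)
      (fun t ht => (hφ t ht).continuousAt.continuousWithinAt) ?_ ?_ ?_ <;>
      rw [interior_Icc]
    · exact fun t ht => (hφ t (Ioo_subset_Icc_self ht)).hasDerivWithinAt
    · exact fun t ht => (hφ' t ht).hasDerivWithinAt
    · exact hφ''
  have ha : a ∈ Icc a b := left_mem_Icc.2 hab.le
  have hb : b ∈ Icc a b := right_mem_Icc.2 hab.le
  exact ⟨hconv.le_slope_of_hasDerivAt ha hb hab (hφ a ha),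
    hconv.slope_le_of_hasDerivAt ha hb hab (hφ b hb)⟩

lemma eventually_add_mul_le_mul_rpow {p ε : ℝ} (hp : 1 < p) (hε : 0 < ε) (a b : ℝ) :
    ∀ᶠ r in atTop, a + b * r ≤ ε * r ^ p := by
  filter_upwards [eventually_ge_atTop 1,
    (tendsto_rpow_atTop (sub_pos.2 hp)).eventually_ge_atTop ((|a| + |b|) / ε)] with r hr1 hr
  have hr0 : 0 < r := by linarith
  calc a + b * r ≤ (|a| + |b|) * r := by
        nlinarith [le_abs_self a, le_abs_self b, abs_nonneg a, abs_nonneg b]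
    _ ≤ ε * r ^ (p - 1) * r := by
        gcongr; rwa [div_le_iff₀' hε] at hr
    _ = ε * r ^ p := by rw [Real.rpow_sub_one hr0.ne']; field_simp

lemma lt_liminf_of_lt_of_eventually_le {α : Type*} {l : Filter α} [l.NeBot] {f : α → ℝ}
    {a b c : ℝ} (hab : a < b) (hb : ∀ᶠ x in l, b ≤ f x) (hc : ∀ᶠ x in l, f x ≤ c) :
    a < liminf f l :=
  hab.trans_le (le_liminf_of_le (isCoboundedUnder_ge_of_eventually_le l hc) hb)

lemma pos_liminf_div_and_one_lt_liminf_div {α : Type*} {l : Filter α} [l.NeBot]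
    {V G ρ : α → ℝ} {a κ K : ℝ} (ha : 0 < a) (hκ : 0 < κ) (hρ : ∀ᶠ x in l, 0 < ρ x)
    (hV : ∀ᶠ x in l, a * ρ x ≤ V x) (hgap : ∀ᶠ x in l, κ * ρ x ≤ G x - V x)
    (hG : ∀ᶠ x in l, G x ≤ K * ρ x) :
    0 < liminf (fun x => V x / ρ x) l ∧ 1 < liminf (fun x => G x / V x) l := by
  have hK : 0 < K := by
    obtain ⟨x, hρx, hVx, hgapx, hGx⟩ := (hρ.and (hV.and (hgap.and hG))).exists
    exact pos_of_mul_pos_left (by nlinarith) hρx.le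
  constructor
  · refine lt_liminf_of_lt_of_eventually_le ha ?_ ?_ (c := K)
    · filter_upwards [hρ, hV] with x hρx hVx
      rwa [le_div_iff₀ hρx]
    · filter_upwards [hρ, hV, hgap, hG] with x hρx hVx hgapx hGx
      rw [div_le_iff₀ hρx]; nlinarith
  · refine lt_liminf_of_lt_of_eventually_le (lt_add_of_pos_right 1 (div_pos hκ hK)) ?_ ?_
      (c := K / a)
    · filter_upwards [hρ, hV, hgap, hG] with x hρx hVx hgapx hGx
      have hVpos : 0 < V x := by nlinarith
      have hVK : V x ≤ K * ρ x := by nlinarith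
      have hVρ : κ * V x / K ≤ κ * ρ x := by
        rw [div_le_iff₀ hK]; nlinarith [mul_le_mul_of_nonneg_left hVK hκ.le]
      rw [le_div_iff₀ hVpos, add_mul, one_mul, div_mul_eq_mul_div]
      linarith
    · filter_upwards [hρ, hV, hG] with x hρx hVx hGx
      have hVpos : 0 < V x := by nlinarith
      rw [div_le_div_iff₀ hVpos ha]; nlinarith

section

variable {E : Type*} [NormedAddCommGroup E] [InnerProductSpace ℝ E] [CompleteSpace E]
  {W : E → ℝ}

lemma ContDiff.differentiable_gradient (hW : ContDiff ℝ 2 W) : Differentiable ℝ (gradient W) :=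
  (InnerProductSpace.toDual ℝ E).symm.differentiable.comp
    ((hW.fderiv_right (m := 1) (by norm_num)).differentiable one_ne_zero)

lemma hasDerivAt_comp_smul (hW : Differentiable ℝ W) (y : E) (t : ℝ) :
    HasDerivAt (fun s : ℝ => W (s • y)) ⟪gradient W (t • y), y⟫ t := by
  rw [inner_gradient_left]
  exact (hW _).hasFDerivAt.comp_hasDerivAt t (by simpa using (hasDerivAt_id t).smul_const y)

lemma hasDerivAt_inner_gradient_comp_smul (hW : ContDiff ℝ 2 W) (y : E) (t : ℝ) :
    HasDerivAt (fun s : ℝ => ⟪gradient W (s • y), y⟫)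
      ⟪fderiv ℝ (gradient W) (t • y) y, y⟫ t := by
  have hline : HasDerivAt (fun s : ℝ => s • y) y t := by
    simpa using (hasDerivAt_id t).smul_const y
  simpa using ((hW.differentiable_gradient _).hasFDerivAt.comp_hasDerivAt t hline).inner ℝ
    (hasDerivAt_const t y)

lemma mul_rpow_one_add_le_inner_fderiv_gradient {p lam : ℝ} (hlam : 0 ≤ lam)
    (hWhess : ∀ x v : E, lam * √(1 + ‖x‖ ^ 2) ^ (p - 2) * ‖v‖ ^ 2
      ≤ ⟪fderiv ℝ (gradient W) x v, v⟫) (y : E) {t : ℝ} (ht : 0 ≤ t) :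
    lam * min 1 (√2 ^ (p - 2))⁻¹ * (1 + t * ‖y‖) ^ (p - 2) * ‖y‖ ^ 2
      ≤ ⟪fderiv ℝ (gradient W) (t • y) y, y⟫ := by
  have hty : ‖t • y‖ = t * ‖y‖ := by rw [norm_smul, Real.norm_of_nonneg ht]
  refine le_trans ?_ (hWhess (t • y) y)
  rw [mul_assoc lam, hty]
  gcongr
  exact rpow_one_add_le_rpow_sqrt_one_add_sq _ (by positivity)

lemma exists_pos_convexity_bounds {p lam : ℝ} (hp : 1 < p) (hlam : 0 < lam)
    (hW : ContDiff ℝ 2 W)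
    (hWhess : ∀ x v : E, lam * √(1 + ‖x‖ ^ 2) ^ (p - 2) * ‖v‖ ^ 2
      ≤ ⟪fderiv ℝ (gradient W) x v, v⟫) :
    ∃ A > 0, ∀ y : E,
      A * ((1 + ‖y‖) ^ p - 1 - p * ‖y‖) ≤ W y - W 0 - ⟪gradient W 0, y⟫ ∧
      A * (p * ‖y‖ * (1 + ‖y‖) ^ (p - 1) - (1 + ‖y‖) ^ p + 1)
        ≤ ⟪gradient W y, y⟫ - (W y - W 0) := by
  set c := min 1 (√2 ^ (p - 2))⁻¹ with hc_def
  have hc : 0 < c := lt_min one_pos (by positivity)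
  have hp0 : 0 < p := by linarith
  have hp1 : 0 < p - 1 := by linarith
  refine ⟨lam * c / (p * (p - 1)), by positivity, fun y => ?_⟩
  set A := lam * c / (p * (p - 1)) with hA_def
  set r := ‖y‖
  have hline : ∀ t : ℝ, HasDerivAt (fun s : ℝ => 1 + s * r) r t := fun t => by
    simpa using ((hasDerivAt_id t).mul_const r).const_add 1
  have hbase : ∀ t ∈ Icc (0 : ℝ) 1, 1 + t * r ≠ 0 := fun t ht => by
    have := mul_nonneg ht.1 (norm_nonneg y); positivity
  obtain ⟨hleft, hright⟩ := deriv_le_slope_le_deriv_of_deriv2_nonneg zero_lt_one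
    (φ := fun t => W (t • y) - A * (1 + t * r) ^ p)
    (φ' := fun t => ⟪gradient W (t • y), y⟫ - A * (r * p * (1 + t * r) ^ (p - 1)))
    (φ'' := fun t => ⟪fderiv ℝ (gradient W) (t • y) y, y⟫
      - A * (r * p * (r * (p - 1) * (1 + t * r) ^ (p - 1 - 1))))
    (fun t ht => (hasDerivAt_comp_smul (hW.differentiable (by norm_num)) y t).sub
      (((hline t).rpow_const (Or.inl (hbase t ht))).const_mul A))
    (fun t ht => (hasDerivAt_inner_gradient_comp_smul hW y t).sub
      ((((hline t).rpow_const (Or.inl (hbase t (Ioo_subset_Icc_self ht)))).const_mul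
        (r * p)).const_mul A))
    (fun t ht => by
      have hAc : A * (p * (p - 1)) = lam * c := by rw [hA_def]; field_simp
      have := mul_rpow_one_add_le_inner_fderiv_gradient hlam.le hWhess y ht.1.le
      rw [← hc_def] at this
      rw [sub_nonneg, show p - 1 - 1 = p - 2 by ring]
      linear_combination this + (r ^ 2 * (1 + t * r) ^ (p - 2)) * hAc)
  simp only [slope_def_field, zero_smul, one_smul, zero_mul, one_mul, add_zero, sub_zero,
    div_one, Real.one_rpow, mul_one] at hleft hright
  constructor <;> linarith

lemma eventually_mul_rpow_le_of_convexity_bound {p A B : ℝ} (hp : 1 < p) (hA : 0 < A)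
    (hB : ‖gradient W 0‖ ≤ B)
    (h : ∀ y : E, A * ((1 + ‖y‖) ^ p - 1 - p * ‖y‖) ≤ W y - W 0 - ⟪gradient W 0, y⟫) :
    ∀ᶠ y in Bornology.cobounded E, A / 2 * ‖y‖ ^ p ≤ W y := by
  filter_upwards [tendsto_norm_cobounded_atTop.eventually
    (eventually_add_mul_le_mul_rpow hp (half_pos hA) (A - W 0) (B + A * p))] with y hy
  have hgrad0 : -(B * ‖y‖) ≤ ⟪gradient W 0, y⟫ := by
    have := (abs_real_inner_le_norm (gradient W 0) y).trans
      (mul_le_mul_of_nonneg_right hB (norm_nonneg y))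
    linarith [neg_abs_le ⟪gradient W 0, y⟫]
  have hpow : A * ‖y‖ ^ p ≤ A * (1 + ‖y‖) ^ p := by gcongr; linarith
  linarith [h y]

lemma eventually_mul_rpow_le_inner_gradient_sub {p A : ℝ} (hp : 1 < p) (hA : 0 < A)
    (h : ∀ y : E, A * (p * ‖y‖ * (1 + ‖y‖) ^ (p - 1) - (1 + ‖y‖) ^ p + 1)
      ≤ ⟪gradient W y, y⟫ - (W y - W 0)) :
    ∀ᶠ y in Bornology.cobounded E, A * (p - 1) / 4 * ‖y‖ ^ p ≤ ⟪gradient W y, y⟫ - W y := by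
  have hp1 : 0 < p - 1 := by linarith
  filter_upwards [tendsto_norm_cobounded_atTop.eventually (eventually_ge_atTop (2 / (p - 1))),
    tendsto_norm_cobounded_atTop.eventually
      (eventually_add_mul_le_mul_rpow hp (ε := A * (p - 1) / 4) (by positivity) (W 0 - A) 0)]
    with y hr hy
  set r := ‖y‖
  have hr0 : 0 < r := lt_of_lt_of_le (by positivity) hr
  have hsplit (s : ℝ) (hs : 0 < s) : s ^ p = s ^ (p - 1) * s := by
    rw [← Real.rpow_add_one hs.ne', sub_add_cancel]
  have hlin : (p - 1) * r / 2 ≤ (p - 1) * r - 1 := by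
    rw [div_le_iff₀ hp1] at hr; linarith
  have hlead : (p - 1) / 2 * r ^ p ≤ p * r * (1 + r) ^ (p - 1) - (1 + r) ^ p :=
    calc (p - 1) / 2 * r ^ p = r ^ (p - 1) * ((p - 1) * r / 2) := by rw [hsplit r hr0]; ring
      _ ≤ (1 + r) ^ (p - 1) * ((p - 1) * r - 1) := by
          gcongr; linarith
      _ = p * r * (1 + r) ^ (p - 1) - (1 + r) ^ p := by rw [hsplit (1 + r) (by positivity)]; ring
  nlinarith [h y, mul_le_mul_of_nonneg_left hlead hA.le]

lemma eventually_inner_gradient_self_le {p B : ℝ} (hp : 1 ≤ p)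
    (hWgrad : ∀ x : E, ‖gradient W x‖ ≤ B * √(1 + ‖x‖ ^ 2) ^ (p - 1)) :
    ∀ᶠ y in Bornology.cobounded E, ⟪gradient W y, y⟫ ≤ B * 2 ^ (p - 1) * ‖y‖ ^ p := by
  have hB : 0 ≤ B := by simpa using (norm_nonneg _).trans (hWgrad 0)
  have hp1 : 0 ≤ p - 1 := by linarith
  filter_upwards [tendsto_norm_cobounded_atTop.eventually (eventually_ge_atTop 1)] with y hr
  have hr0 : 0 < ‖y‖ := by linarith
  calc ⟪gradient W y, y⟫ ≤ ‖gradient W y‖ * ‖y‖ := real_inner_le_norm _ _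
    _ ≤ B * √(1 + ‖y‖ ^ 2) ^ (p - 1) * ‖y‖ := by gcongr; exact hWgrad y
    _ ≤ B * (2 * ‖y‖) ^ (p - 1) * ‖y‖ := by
        gcongr
        exact (sqrt_one_add_sq_le_one_add (norm_nonneg y)).trans (by linarith)
    _ = B * 2 ^ (p - 1) * ‖y‖ ^ p := by
        rw [Real.mul_rpow zero_le_two hr0.le, Real.rpow_sub_one hr0.ne']; field_simp

end

theorem growth_conditions_of_uniformly_convex_general
    (d : ℕ) (hd : 1 ≤ d) (p lam B : ℝ) (hp : 1 < p) (hlam : 0 < lam)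
    (W : EuclideanSpace ℝ (Fin d) → ℝ) (hW2 : ContDiff ℝ 2 W)
    (hWhess : ∀ (x : EuclideanSpace ℝ (Fin d)) (v : EuclideanSpace ℝ (Fin d)),
      lam * Real.sqrt (1 + ‖x‖ ^ 2) ^ (p - 2) * ‖v‖ ^ 2
        ≤ ⟪fderiv ℝ (fun y => gradient W y) x v, v⟫)
    (hWgrad : ∀ x, ‖gradient W x‖ ≤ B * Real.sqrt (1 + ‖x‖ ^ 2) ^ (p - 1)) :
    0 < liminf (fun y => W y / ‖y‖ ^ p)
      (cocompact (EuclideanSpace ℝ (Fin d))) ∧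
    1 < liminf (fun y => ⟪gradient W y, y⟫ / W y)
      (cocompact (EuclideanSpace ℝ (Fin d))) := by
  -- makes the space nontrivial, so that `cobounded` is `NeBot`
  have : Nonempty (Fin d) := ⟨⟨0, hd⟩⟩
  obtain ⟨A, hA, hconvex⟩ := exists_pos_convexity_bounds hp hlam hW2 hWhess
  have hgrad0 : ‖gradient W 0‖ ≤ B := by simpa using hWgrad 0
  have hnorm_pos : ∀ᶠ y in Bornology.cobounded (EuclideanSpace ℝ (Fin d)), 0 < ‖y‖ ^ p :=
    tendsto_norm_cobounded_atTop.eventually (eventually_gt_atTop 0) |>.mono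
      fun y hy => Real.rpow_pos_of_pos hy p
  rw [← Metric.cobounded_eq_cocompact]
  exact pos_liminf_div_and_one_lt_liminf_div (half_pos hA) (by have := sub_pos.2 hp; positivity)
    hnorm_pos
    (eventually_mul_rpow_le_of_convexity_bound hp hA hgrad0 fun y => (hconvex y).1)
    (eventually_mul_rpow_le_inner_gradient_sub hp hA fun y => (hconvex y).2)
    (eventually_inner_gradient_self_le hp.le hWgrad)

/-- Verification (Section 3.4) that the hypotheses of Theorem 1.2 on `W` imply
the growth conditions (1.3) of Theorem 1.1. -/
theorem growth_conditions_of_uniformly_convex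
    (d : ℕ) (hd : 1 ≤ d) (p lam B : ℝ) (hp : 1 < p) (hlam : 0 < lam) (hB : 0 < B)
    (W : EuclideanSpace ℝ (Fin d) → ℝ) (hW2 : ContDiff ℝ 2 W)
    (hWinf : ∃ m > 0, ∀ x, m ≤ W x)
    (hWhess : ∀ (x : EuclideanSpace ℝ (Fin d)) (v : EuclideanSpace ℝ (Fin d)),
      lam * Real.sqrt (1 + ‖x‖ ^ 2) ^ (p - 2) * ‖v‖ ^ 2
        ≤ ⟪fderiv ℝ (fun y => gradient W y) x v, v⟫)
    (hWgrad : ∀ x, ‖gradient W x‖ ≤ B * Real.sqrt (1 + ‖x‖ ^ 2) ^ (p - 1)) :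
    0 < liminf (fun y => W y / ‖y‖ ^ p)
      (cocompact (EuclideanSpace ℝ (Fin d))) ∧
    1 < liminf (fun y => ⟪gradient W y, y⟫ / W y)
      (cocompact (EuclideanSpace ℝ (Fin d))) :=
  growth_conditions_of_uniformly_convex_general d hd p lam B hp hlam W hW2 hWhess hWgrad
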